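/- Let 0 < s < 1, b > 0, q > 0, and define the Mhaskar–Saff functional F_s(a) = (Γ(1+s)/(2^s Γ((1+s)/2)))·a^{−s}·g(a) where g(a) = Γ((1−s)/2) − q(√π/Γ(1+s/2))(a/√(a²+b²))^s ₂F₁(s/2,(1+s)/2;1+s/2; a²/(a²+b²)). Then lim_{a→0⁺} F_s(a) = +∞ and lim_{a→+∞} F_s(a) = 0. -/

import Mathlib

open Real Set Filter

/-- The Gauss hypergeometric function `₂F₁(α, β; γ; x)` as a power series sum. -/
noncomputable def twoF1 (α β γ x : ℝ) : ℝ :=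
  ∑' k : ℕ, ((ascPochhammer ℝ k).eval α * (ascPochhammer ℝ k).eval β /
      ((ascPochhammer ℝ k).eval γ * (Nat.factorial k))) * x ^ k

/-- The Mhaskar–Saff functional `F_s(a)` for the interval `[−a,a]`. -/
noncomputable def MSfunctional (s q b a : ℝ) : ℝ :=
  (Real.Gamma (1 + s) / (2 ^ s * Real.Gamma ((1 + s) / 2))) * a ^ (-s) *
    (Real.Gamma ((1 - s) / 2) -
      q * (Real.sqrt Real.pi / Real.Gamma (1 + s / 2)) *
        (a / Real.sqrt (a ^ 2 + b ^ 2)) ^ s *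
        twoF1 (s / 2) ((1 + s) / 2) (1 + s / 2) (a ^ 2 / (a ^ 2 + b ^ 2)))

/-!
Write `F_s(a) = C a^{-s} (Γ((1-s)/2) - q' T(a))`, where `q' = q √π / Γ(1+s/2)`,
`T(a) = r^s ₂F₁(s/2, (1+s)/2; 1+s/2; r²)` and `r = a/√(a²+b²)`. The hypergeometric series has
positive coefficients and, since `γ - α - β = (1-s)/2 > 0`, it converges at `1` (Raabe's test,
as a telescoping bound on `c_k (k+2)`); hence `0 ≤ T(a) ≤ ₂F₁(…; 1) r^s` with `r ≤ min(1, a/b)`.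
As `a → 0⁺` the product `a^{-s} T(a)` therefore stays bounded while `a^{-s} Γ((1-s)/2) → ∞`;
as `a → ∞` the bracket stays bounded while `a^{-s} → 0`.
-/

theorem summable_of_mul_le_sub_succ {c f : ℕ → ℝ} {ε : ℝ} (hε : 0 < ε) (hc : ∀ k, 0 ≤ c k)
    (hf : ∀ k, 0 ≤ f k) (h : ∀ k, ε * c k ≤ f k - f (k + 1)) : Summable c := by
  refine summable_of_sum_range_le (c := f 0 / ε) hc fun n => ?_
  rw [le_div_iff₀' hε, Finset.mul_sum]
  calc ∑ k ∈ Finset.range n, ε * c k ≤ ∑ k ∈ Finset.range n, (f k - f (k + 1)) :=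
        Finset.sum_le_sum fun k _ => h k
    _ = f 0 - f n := Finset.sum_range_sub' f n
    _ ≤ f 0 := sub_le_self _ (hf n)

section Hypergeometric

noncomputable def twoF1Coeff (α β γ : ℝ) (k : ℕ) : ℝ :=
  (ascPochhammer ℝ k).eval α * (ascPochhammer ℝ k).eval β /
    ((ascPochhammer ℝ k).eval γ * (Nat.factorial k))

variable {α β γ : ℝ}

theorem twoF1_eq_tsum (α β γ x : ℝ) : twoF1 α β γ x = ∑' k, twoF1Coeff α β γ k * x ^ k := rfl

theorem twoF1Coeff_pos (hα : 0 < α) (hβ : 0 < β) (hγ : 0 < γ) (k : ℕ) :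
    0 < twoF1Coeff α β γ k := by
  unfold twoF1Coeff
  have := ascPochhammer_pos k α hα
  have := ascPochhammer_pos k β hβ
  have := ascPochhammer_pos k γ hγ
  positivity

theorem twoF1Coeff_succ (hγ : 0 < γ) (k : ℕ) :
    twoF1Coeff α β γ (k + 1) =
      twoF1Coeff α β γ k * ((α + k) * (β + k) / ((γ + k) * (k + 1))) := by
  have := (ascPochhammer_pos k γ hγ).ne'
  have : γ + k ≠ 0 := by positivity
  unfold twoF1Coeff
  rw [ascPochhammer_succ_eval, ascPochhammer_succ_eval, ascPochhammer_succ_eval,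
    Nat.factorial_succ]
  push_cast
  field_simp

theorem twoF1_nonneg (hα : 0 < α) (hβ : 0 < β) (hγ : 0 < γ) {x : ℝ} (hx : 0 ≤ x) :
    0 ≤ twoF1 α β γ x :=
  tsum_nonneg fun k => mul_nonneg (twoF1Coeff_pos hα hβ hγ k).le (pow_nonneg hx k)

theorem twoF1_le_twoF1_one (hα : 0 < α) (hβ : 0 < β) (hγ : 0 < γ)
    (hsum : Summable (twoF1Coeff α β γ)) {x : ℝ} (hx0 : 0 ≤ x) (hx1 : x ≤ 1) :
    twoF1 α β γ x ≤ twoF1 α β γ 1 := by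
  have hle : ∀ k, twoF1Coeff α β γ k * x ^ k ≤ twoF1Coeff α β γ k := fun k =>
    mul_le_of_le_one_right (twoF1Coeff_pos hα hβ hγ k).le (pow_le_one₀ hx0 hx1)
  simp only [twoF1_eq_tsum, one_pow, mul_one]
  exact Summable.tsum_le_tsum hle (hsum.of_nonneg_of_le
    (fun k => mul_nonneg (twoF1Coeff_pos hα hβ hγ k).le (pow_nonneg hx0 k)) hle) hsum

end Hypergeometric

theorem twoF1Coeff_mul_le_sub_succ {s : ℝ} (hs0 : 0 < s) (hs1 : s < 1) (k : ℕ) :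
    (1 - s) / 6 * twoF1Coeff (s / 2) ((1 + s) / 2) (1 + s / 2) k ≤
      twoF1Coeff (s / 2) ((1 + s) / 2) (1 + s / 2) k * ((k : ℝ) + 2) -
        twoF1Coeff (s / 2) ((1 + s) / 2) (1 + s / 2) (k + 1) * (((k + 1 : ℕ) : ℝ) + 2) := by
  have hc := twoF1Coeff_pos (by positivity : 0 < s / 2) (by positivity : 0 < (1 + s) / 2)
    (by positivity : 0 < 1 + s / 2) k
  have hk : (0 : ℝ) ≤ k := k.cast_nonneg
  have hratio : (s / 2 + k) * ((1 + s) / 2 + k) / ((1 + s / 2 + k) * (k + 1)) * (k + 3) ≤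
      k + 2 - (1 - s) / 6 := by
    rw [div_mul_eq_mul_div, div_le_iff₀ (by positivity)]
    nlinarith [mul_nonneg hk hk, mul_nonneg (mul_nonneg hk hk) hk, mul_nonneg hk hs0.le,
      mul_nonneg (mul_nonneg hk hk) hs0.le, mul_nonneg hk (mul_nonneg hs0.le hs0.le),
      mul_pos hs0 hs0]
  rw [twoF1Coeff_succ (by positivity)]
  push_cast
  nlinarith [mul_le_mul_of_nonneg_left hratio hc.le]

theorem summable_twoF1Coeff {s : ℝ} (hs0 : 0 < s) (hs1 : s < 1) :
    Summable (twoF1Coeff (s / 2) ((1 + s) / 2) (1 + s / 2)) := by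
  have hc := twoF1Coeff_pos (by positivity : 0 < s / 2) (by positivity : 0 < (1 + s) / 2)
    (by positivity : 0 < 1 + s / 2)
  exact summable_of_mul_le_sub_succ (by linarith : 0 < (1 - s) / 6) (fun k => (hc k).le)
    (fun k => by have := hc k; positivity) (twoF1Coeff_mul_le_sub_succ hs0 hs1)

/-- Up to the factor `Γ(1+s) √π / (2^s Γ((1+s)/2) Γ(1+s/2))`, this is
`a^s U_s^{ω_{[−a,a]}}(bi)`. -/
noncomputable def msPotential (s b a : ℝ) : ℝ :=
  (a / √(a ^ 2 + b ^ 2)) ^ s * twoF1 (s / 2) ((1 + s) / 2) (1 + s / 2) (a ^ 2 / (a ^ 2 + b ^ 2))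

section Potential

variable {s b a : ℝ}

theorem msPotential_nonneg (hs0 : 0 < s) (ha : 0 ≤ a) : 0 ≤ msPotential s b a :=
  mul_nonneg (rpow_nonneg (by positivity) s)
    (twoF1_nonneg (by positivity) (by positivity) (by positivity) (by positivity))

theorem msPotential_le (hs0 : 0 < s) (hs1 : s < 1) (ha : 0 ≤ a) :
    msPotential s b a ≤
      twoF1 (s / 2) ((1 + s) / 2) (1 + s / 2) 1 * (a / √(a ^ 2 + b ^ 2)) ^ s := by
  rw [msPotential, mul_comm]
  gcongr
  exact twoF1_le_twoF1_one (by positivity) (by positivity) (by positivity)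
    (summable_twoF1Coeff hs0 hs1) (by positivity) (div_le_one_of_le₀ (by nlinarith) (by positivity))

theorem abs_msPotential_le (hs0 : 0 < s) (hs1 : s < 1) (ha : 0 ≤ a) :
    |msPotential s b a| ≤ twoF1 (s / 2) ((1 + s) / 2) (1 + s / 2) 1 := by
  have hr : a / √(a ^ 2 + b ^ 2) ≤ 1 :=
    div_le_one_of_le₀ ((le_abs_self a).trans (abs_le_sqrt (by nlinarith))) (sqrt_nonneg _)
  rw [abs_of_nonneg (msPotential_nonneg hs0 ha)]
  calc msPotential s b a ≤ _ := msPotential_le hs0 hs1 ha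
    _ ≤ twoF1 (s / 2) ((1 + s) / 2) (1 + s / 2) 1 * 1 := by
      gcongr
      · exact twoF1_nonneg (by positivity) (by positivity) (by positivity) zero_le_one
      · exact rpow_le_one (by positivity) hr hs0.le
    _ = _ := mul_one _

theorem abs_rpow_neg_mul_msPotential_le (hs0 : 0 < s) (hs1 : s < 1) (hb : 0 < b) (ha : 0 < a) :
    |a ^ (-s) * msPotential s b a| ≤ twoF1 (s / 2) ((1 + s) / 2) (1 + s / 2) 1 * b ^ (-s) := by
  have hr : a / √(a ^ 2 + b ^ 2) ≤ a / b :=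
    div_le_div_of_nonneg_left ha.le hb ((le_abs_self b).trans (abs_le_sqrt (by nlinarith)))
  have hab : a ^ (-s) * (a / b) ^ s = b ^ (-s) := by
    rw [div_rpow ha.le hb.le, rpow_neg ha.le, rpow_neg hb.le]
    field_simp
  rw [abs_of_nonneg (mul_nonneg (by positivity) (msPotential_nonneg hs0 ha.le)), ← hab]
  calc a ^ (-s) * msPotential s b a
      ≤ a ^ (-s) * (twoF1 (s / 2) ((1 + s) / 2) (1 + s / 2) 1 * (a / b) ^ s) := by
        gcongr
        refine (msPotential_le hs0 hs1 ha.le).trans ?_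
        gcongr
        exact twoF1_nonneg (by positivity) (by positivity) (by positivity) zero_le_one
    _ = _ := by ring

end Potential

section Limits

variable {s A B Q K : ℝ} {T : ℝ → ℝ}

theorem tendsto_mul_rpow_neg_mul_sub_nhdsGT_zero (hs : 0 < s) (hA : 0 < A) (hB : 0 < B)
    (hT : ∀ a, 0 < a → |a ^ (-s) * T a| ≤ K) :
    Tendsto (fun a => A * a ^ (-s) * (B - Q * T a)) (nhdsWithin 0 (Ioi 0)) atTop := by
  have hsplit : (fun a => A * a ^ (-s) * (B - Q * T a)) =
      fun a => A * B * a ^ (-s) + -(A * Q) * (a ^ (-s) * T a) := by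
    funext a; ring
  rw [hsplit]
  refine tendsto_atTop_add_right_of_le' _ (-(|A * Q| * K))
    ((tendsto_rpow_neg_nhdsGT_zero (neg_neg_of_pos hs)).const_mul_atTop (mul_pos hA hB)) ?_
  filter_upwards [self_mem_nhdsWithin] with a ha
  have := mul_le_mul_of_nonneg_left (hT a ha) (abs_nonneg (A * Q))
  rw [← abs_mul] at this
  rw [neg_mul]
  linarith [le_abs_self (A * Q * (a ^ (-s) * T a))]

theorem tendsto_mul_rpow_neg_mul_sub_atTop (hs : 0 < s) (hT : ∀ a, 0 < a → |T a| ≤ K) :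
    Tendsto (fun a => A * a ^ (-s) * (B - Q * T a)) atTop (nhds 0) := by
  have hlim : Tendsto (fun a : ℝ => A * a ^ (-s)) atTop (nhds 0) := by
    simpa using (tendsto_rpow_neg_atTop hs).const_mul A
  refine hlim.zero_mul_isBoundedUnder_le (isBoundedUnder_of_eventually_le (a := |B| + |Q| * K) ?_)
  filter_upwards [eventually_gt_atTop 0] with a ha
  calc ‖B - Q * T a‖ ≤ |B| + |Q| * |T a| := by
        rw [Real.norm_eq_abs, ← abs_mul]; exact abs_sub _ _
    _ ≤ |B| + |Q| * K := by gcongr; exact hT a ha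

end Limits

theorem MSfunctional_limits_general (s q b : ℝ) (hs0 : 0 < s) (hs1 : s < 1) (hb : 0 < b) :
    Tendsto (MSfunctional s q b) (nhdsWithin 0 (Ioi 0)) atTop ∧
    Tendsto (MSfunctional s q b) atTop (nhds 0) := by
  have hF : MSfunctional s q b = fun a =>
      Gamma (1 + s) / (2 ^ s * Gamma ((1 + s) / 2)) * a ^ (-s) *
        (Gamma ((1 - s) / 2) - q * (√π / Gamma (1 + s / 2)) * msPotential s b a) := by
    funext a
    simp only [MSfunctional, msPotential]
    ring
  rw [hF]
  refine ⟨tendsto_mul_rpow_neg_mul_sub_nhdsGT_zero hs0 ?_ (Gamma_pos_of_pos (by linarith))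
      fun a ha => abs_rpow_neg_mul_msPotential_le hs0 hs1 hb ha,
    tendsto_mul_rpow_neg_mul_sub_atTop hs0 fun a ha => abs_msPotential_le hs0 hs1 ha.le⟩
  exact div_pos (Gamma_pos_of_pos (by linarith))
    (mul_pos (rpow_pos_of_pos two_pos s) (Gamma_pos_of_pos (by linarith)))

/-- `F_s(a) → +∞` as `a → 0⁺` and `F_s(a) → 0` as `a → ∞`. -/
theorem MSfunctional_limits (s q b : ℝ) (hs0 : 0 < s) (hs1 : s < 1) (hq : 0 < q) (hb : 0 < b) :
    Tendsto (MSfunctional s q b) (nhdsWithin 0 (Ioi 0)) atTop ∧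
    Tendsto (MSfunctional s q b) atTop (nhds 0) :=
  MSfunctional_limits_general s q b hs0 hs1 hb
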